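/- arXiv:math/0508536 — 6 statements merged into one kernel-verified Lean document; each statement's English description precedes it below -/
import Mathlib

section
/- Let V be a complex inner product space, q ∈ ℂ with |q| = 1, and let S = {x ∈ V : ‖x‖ = 1} be the unit sphere of V. For a, b ∈ S define a ⋆ b = i_b^q(a). Then: (1) a ⋆ b ∈ S; (2) a ⋆ a = a for all a ∈ S; (3) for each b ∈ S the map a ↦ a ⋆ b is a bijection of S; (4) (a ⋆ b) ⋆ c = (a ⋆ c) ⋆ (b ⋆ c) for all a, b, c ∈ S. Hence (S, ⋆) is a quandle. -/
open scoped InnerProductSpace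

/-- For a complex inner product space `V` and `q ∈ ℂ` with `|q| = 1`, the unit
sphere `S = {x : ‖x‖ = 1}` with the operation `a ⋆ b = i_b^q(a)`, where
`i_b^q(v) = q·v + (1−q)·(⟨v,b⟩/⟨b,b⟩)·b`, is a quandle: the operation preserves
`S`, is idempotent, each right translation is a bijection of `S`, and right
self-distributivity holds. -/
theorem sphere_iq_quandle (V : Type*) [NormedAddCommGroup V] [InnerProductSpace ℂ V]
    (q : ℂ) (hq : ‖q‖ = 1)
    (I : V → V → V)
    (hI : ∀ a v : V, I a v = q • v + (1 - q) • ((⟪a, v⟫_ℂ / ⟪a, a⟫_ℂ) • a))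
    (star : V → V → V)
    (hstar : ∀ a b : V, star a b = I b a) :
    (∀ a b : V, ‖a‖ = 1 → ‖b‖ = 1 → ‖star a b‖ = 1) ∧
    (∀ a : V, ‖a‖ = 1 → star a a = a) ∧
    (∀ b : V, ‖b‖ = 1 →
      Set.BijOn (fun a : V => star a b) {x : V | ‖x‖ = 1} {x : V | ‖x‖ = 1}) ∧
    (∀ a b c : V, ‖a‖ = 1 → ‖b‖ = 1 → ‖c‖ = 1 →
      star (star a b) c = star (star a c) (star b c)) := by
  have hq0 : q ≠ 0 := by intro h; simp [h] at hq
  have hqq : (starRingEnd ℂ) q * q = 1 := by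
    rw [mul_comm, Complex.mul_conj]
    norm_cast
    rw [Complex.normSq_eq_norm_sq, hq]; norm_num
  have hinner : ∀ x : V, ‖x‖ = 1 → ⟪x, x⟫_ℂ = 1 := by
    intro x hx
    rw [inner_self_eq_norm_sq_to_K, hx]; norm_num
  have hstar' : ∀ a b : V, ‖b‖ = 1 → star a b = q • a + (1 - q) • (⟪b, a⟫_ℂ • b) := by
    intro a b hb
    rw [hstar, hI, hinner b hb, div_one]
  have hnorm : ∀ p : ℂ, ‖p‖ = 1 → ∀ b a : V, ‖b‖ = 1 →
      ‖p • a + (1 - p) • (⟪b, a⟫_ℂ • b)‖ = ‖a‖ := by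
    intro p hp b a hb
    have hpp : (starRingEnd ℂ) p * p = 1 := by
      rw [mul_comm, Complex.mul_conj]
      norm_cast
      rw [Complex.normSq_eq_norm_sq, hp]; norm_num
    have h1 : ⟪p • a + (1 - p) • (⟪b, a⟫_ℂ • b), p • a + (1 - p) • (⟪b, a⟫_ℂ • b)⟫_ℂ
        = ⟪a, a⟫_ℂ := by
      simp only [inner_add_left, inner_add_right, inner_smul_left, inner_smul_right,
        hinner b hb, ← inner_conj_symm a b, map_sub, map_one]
      linear_combination (⟪a, a⟫_ℂ - ⟪b, a⟫_ℂ * (starRingEnd ℂ) ⟪b, a⟫_ℂ) * hpp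
    have h3 : ‖p • a + (1 - p) • (⟪b, a⟫_ℂ • b)‖ ^ 2 = ‖a‖ ^ 2 := by
      rw [inner_self_eq_norm_sq_to_K, inner_self_eq_norm_sq_to_K] at h1
      exact_mod_cast h1
    nlinarith [norm_nonneg (p • a + (1 - p) • (⟪b, a⟫_ℂ • b)), norm_nonneg a]
  have key : ∀ a b : V, ‖a‖ = 1 → ‖b‖ = 1 → ‖star a b‖ = 1 := by
    intro a b ha hb
    rw [hstar' a b hb, hnorm q hq b a hb, ha]
  refine ⟨key, ?_, ?_, ?_⟩
  · intro a ha
    rw [hstar, hI]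
    have := hinner a ha
    rw [this, div_one]
    module
  · intro b hb
    set g : V → V := fun a => q⁻¹ • a + (1 - q⁻¹) • (⟪b, a⟫_ℂ • b) with hg
    have hq0' : ‖q⁻¹‖ = 1 := by rw [norm_inv, hq]; norm_num
    have hbb := hinner b hb
    have hleft : ∀ a : V, g (star a b) = a := by
      intro a
      rw [hstar' a b hb]
      simp only [hg, inner_add_right, inner_smul_right, hbb, mul_one]
      match_scalars <;> field_simp <;> ring
    have hright : ∀ a : V, star (g a) b = a := by
      intro a
      rw [hstar' _ b hb]
      simp only [hg, inner_add_right, inner_smul_right, hbb, mul_one]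
      match_scalars <;> field_simp <;> ring
    refine Set.InvOn.bijOn ⟨fun a ha => hleft a, fun a ha => hright a⟩ ?_ ?_
    · intro a ha; exact key a b ha hb
    · intro a ha
      simp only [Set.mem_setOf_eq] at ha ⊢
      rw [hg]
      simpa [ha] using hnorm q⁻¹ hq0' b a hb
  · intro a b c ha hb hc
    have hbc : ‖star b c‖ = 1 := key b c hb hc
    rw [hstar' (star a b) c hc, hstar' (star a c) (star b c) hbc,
      hstar' a b hb, hstar' a c hc, hstar' b c hc]
    have h1 : ⟪c, q • a + (1 - q) • (⟪b, a⟫_ℂ • b)⟫_ℂ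
        = q * ⟪c, a⟫_ℂ + (1 - q) * (⟪b, a⟫_ℂ * ⟪c, b⟫_ℂ) := by
      simp only [inner_add_right, inner_smul_right]
    have h2 : ⟪q • b + (1 - q) • (⟪c, b⟫_ℂ • c), q • a + (1 - q) • (⟪c, a⟫_ℂ • c)⟫_ℂ
        = ⟪b, a⟫_ℂ := by
      simp only [inner_add_left, inner_add_right, inner_smul_left, inner_smul_right,
        hinner c hc, ← inner_conj_symm b c, map_sub, map_one]
      linear_combination (⟪b, a⟫_ℂ - ⟪c, a⟫_ℂ * (starRingEnd ℂ) ⟪c, b⟫_ℂ) * hqq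
    rw [h1, h2]
    module
end

section
/- Let Q be a quandle, n ≥ 1, and let f : Qⁿ → Qⁿ be any map. Define F : Q^{n+1} → Q^{n+1} by F(x_1, …, x_n, x_{n+1}) = σ_n( f(x_1, …, x_n), x_{n+1} ), where σ_n : Q^{n+1} → Q^{n+1} sends (y_1, …, y_n, y_{n+1}) to (y_1, …, y_{n−1}, y_{n+1}, y_n ⋆ y_{n+1}). Then (x_1, …, x_{n+1}) is a fixed point of F if and only if x_{n+1} = x_n and (x_1, …, x_n) is a fixed point of f. In particular, the projection onto the first n coordinates restricts to a bijection from the fixed-point set of F onto the fixed-point set of f. -/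
/-!
Write a tuple as `x = (z, a, b)` and `f (z, a) = (w, c)`. Then `F x = (w, b, c ⋆ b)`, so `F x = x`
means `w = z`, `b = a` and `c ⋆ b = b`; since `b ⋆ b = b` and right multiplication by `b` is
injective, the last equation is `c = b`. Thus `x` is fixed exactly when `b = a` and `(z, a)` is
fixed by `f`, and a fixed `x` is recovered from `(z, a)` by repeating its last entry.
-/

theorem op_eq_right_iff {Q : Type*} {op : Q → Q → Q} (hidem : ∀ a, op a a = a)
    (hinj : ∀ b, Function.Injective fun a => op a b) {a b : Q} : op a b = b ↔ a = b :=
  ⟨fun h => hinj b (h.trans (hidem b).symm), fun h => h ▸ hidem a⟩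

theorem Fin.bijOn_init_of_last_eq {α : Type*} {n : ℕ} (g : (Fin n → α) → α)
    (s : Set (Fin n → α)) :
    Set.BijOn Fin.init
      {x : Fin (n + 1) → α | x (Fin.last n) = g (Fin.init x) ∧ Fin.init x ∈ s} s := by
  refine ⟨fun x hx => hx.2, fun x hx y hy hxy => ?_, fun y hy => ⟨Fin.snoc y (g y), ?_, ?_⟩⟩
  · rw [← Fin.snoc_init_self x, ← Fin.snoc_init_self y, hx.1, hy.1,
      show Fin.init x = Fin.init y from hxy]
  · simpa using hy
  · simp

theorem braid_apply_snoc_snoc {Q : Type*} {op : Q → Q → Q} {n : ℕ}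
    {σ : (Fin (n + 2) → Q) → (Fin (n + 2) → Q)}
    (hσ : ∀ (y : Fin (n + 2) → Q) (j : Fin (n + 2)),
      σ y j =
        if j = (Fin.last n).castSucc then y (Fin.last (n + 1))
        else if j = Fin.last (n + 1) then op (y (Fin.last n).castSucc) (y (Fin.last (n + 1)))
        else y j)
    (z : Fin n → Q) (a b : Q) :
    σ (Fin.snoc (Fin.snoc z a) b) = Fin.snoc (Fin.snoc z b) (op a b) := by
  funext j
  rw [hσ]
  induction j using Fin.lastCases with
  | last => simp [(Fin.castSucc_lt_last _).ne']
  | cast i =>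
    induction i using Fin.lastCases with
    | last => simp
    | cast k => simp [(Fin.castSucc_lt_last k).ne]

theorem stabilization_fixed_iff {Q : Type*} {op : Q → Q → Q} (hidem : ∀ a, op a a = a)
    (hinj : ∀ b, Function.Injective fun a => op a b) {n : ℕ}
    {f : (Fin (n + 1) → Q) → (Fin (n + 1) → Q)} {σ F : (Fin (n + 2) → Q) → (Fin (n + 2) → Q)}
    (hσ : ∀ z a b, σ (Fin.snoc (Fin.snoc z a) b) = Fin.snoc (Fin.snoc z b) (op a b))
    (hF : ∀ x, F x = σ (Fin.snoc (f (Fin.init x)) (x (Fin.last (n + 1)))))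
    (x : Fin (n + 2) → Q) :
    F x = x ↔ x (Fin.last (n + 1)) = Fin.init x (Fin.last n) ∧ f (Fin.init x) = Fin.init x := by
  obtain ⟨z, a, b, rfl⟩ : ∃ z a b, x = Fin.snoc (Fin.snoc z a) b :=
    ⟨_, _, _, by rw [Fin.snoc_init_self, Fin.snoc_init_self]⟩
  obtain ⟨w, c, hwc⟩ : ∃ w c, f (Fin.snoc z a) = Fin.snoc w c :=
    ⟨_, _, (Fin.snoc_init_self _).symm⟩
  simp only [hF, Fin.init_snoc, Fin.snoc_last, hwc, hσ, Fin.snoc_inj, op_eq_right_iff hidem hinj]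
  constructor
  · rintro ⟨⟨rfl, rfl⟩, rfl⟩
    exact ⟨rfl, rfl, rfl⟩
  · rintro ⟨rfl, rfl, rfl⟩
    exact ⟨⟨rfl, rfl⟩, rfl⟩

/-- Positive stabilization step of Markov invariance. Let `Q` be a quandle and
`f : Qᴺ → Qᴺ` any map (here `N = n+1 ≥ 1`). Let `σ` be the elementary braid map
on `Q^{N+1}` acting on the last two coordinates,
`σ(y₁,…,y_N,y_{N+1}) = (y₁,…,y_{N−1}, y_{N+1}, y_N ⋆ y_{N+1})`, and let
`F(x₁,…,x_N,x_{N+1}) = σ(f(x₁,…,x_N), x_{N+1})`. Then `x` is a fixed point of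
`F` iff its last coordinate equals its `N`-th one and `(x₁,…,x_N)` is a fixed
point of `f`; in particular, projection onto the first `N` coordinates is a
bijection from the fixed-point set of `F` onto that of `f`. -/
theorem markov_positive_stabilization (Q : Type*) (op : Q → Q → Q)
    (hidem : ∀ a : Q, op a a = a)
    (hbij : ∀ b : Q, Function.Bijective (fun a : Q => op a b))
    (n : ℕ)
    (f : (Fin (n + 1) → Q) → (Fin (n + 1) → Q))
    (σ : (Fin (n + 2) → Q) → (Fin (n + 2) → Q))
    (hσ : ∀ (y : Fin (n + 2) → Q) (j : Fin (n + 2)),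
      σ y j =
        if j = (⟨n, by omega⟩ : Fin (n + 2)) then y ⟨n + 1, by omega⟩
        else if j = (⟨n + 1, by omega⟩ : Fin (n + 2)) then
          op (y ⟨n, by omega⟩) (y ⟨n + 1, by omega⟩)
        else y j)
    (F : (Fin (n + 2) → Q) → (Fin (n + 2) → Q))
    (hF : ∀ x : Fin (n + 2) → Q,
      F x = σ (Fin.snoc (f (Fin.init x)) (x (Fin.last (n + 1))))) :
    (∀ x : Fin (n + 2) → Q,
      F x = x ↔ (x (Fin.last (n + 1)) = x (⟨n, by omega⟩ : Fin (n + 2)) ∧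
        f (Fin.init x) = Fin.init x)) ∧
    Set.BijOn (fun x : Fin (n + 2) → Q => Fin.init x)
      {x | F x = x} {x | f x = x} := by
  have key := stabilization_fixed_iff hidem (fun b => (hbij b).1) (braid_apply_snoc_snoc hσ) hF
  refine ⟨key, ?_⟩
  convert Fin.bijOn_init_of_last_eq (fun y => y (Fin.last n)) {y | f y = y} using 1
  ext x
  exact key x
end

section
/- Let S² be the unit sphere in ℝ³ (Euclidean space of dimension 3) with the quandle operation a ⋆ b = 2⟨a,b⟩b − a. Then the set J = {(a,b) ∈ S² × S² : b ⋆ a = b and a ⋆ b = a} (the space of colourings of the Hopf link diagram) equals {(a, a) : a ∈ S²} ∪ {(a, −a) : a ∈ S²}, and J, with the subspace topology from S² × S², is homeomorphic to the disjoint union S² ⊔ S² of two copies of the sphere. -/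
open scoped InnerProductSpace

private lemma eq_zero_of_eq_neg_aux {V : Type*} [AddCommGroup V] [Module ℝ V]
    {x : V} (h : x = -x) : x = 0 := by
  have h2 : (2 : ℝ) • x = 0 := by
    rw [two_smul]; nth_rewrite 1 [h]; simp
  rcases smul_eq_zero.mp h2 with h' | h'
  · norm_num at h'
  · exact h'

/-- For the sphere quandle `S² ⊆ ℝ³` with `a ⋆ b = 2⟨a,b⟫b − a`, the space of
colourings of the Hopf link diagram,
`J = {(a,b) ∈ S² × S² : b ⋆ a = b ∧ a ⋆ b = a}`, equals
`{(a,a) : a ∈ S²} ∪ {(a,−a) : a ∈ S²}` and is homeomorphic to the disjoint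
union `S² ⊔ S²` of two copies of the sphere. -/
theorem hopf_link_invariant_space
    (star : EuclideanSpace ℝ (Fin 3) → EuclideanSpace ℝ (Fin 3) →
      EuclideanSpace ℝ (Fin 3))
    (hstar : ∀ a b : EuclideanSpace ℝ (Fin 3),
      star a b = (2 * ⟪a, b⟫_ℝ) • b - a)
    (J : Set (EuclideanSpace ℝ (Fin 3) × EuclideanSpace ℝ (Fin 3)))
    (hJ : J = {p | ‖p.1‖ = 1 ∧ ‖p.2‖ = 1 ∧
      star p.2 p.1 = p.2 ∧ star p.1 p.2 = p.1}) :
    J = {p | ‖p.1‖ = 1 ∧ p.2 = p.1} ∪ {p | ‖p.1‖ = 1 ∧ p.2 = -p.1} ∧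
    Nonempty (J ≃ₜ
      (Metric.sphere (0 : EuclideanSpace ℝ (Fin 3)) 1 ⊕
        Metric.sphere (0 : EuclideanSpace ℝ (Fin 3)) 1)) := by
  have hset : J = {p | ‖p.1‖ = 1 ∧ p.2 = p.1} ∪ {p | ‖p.1‖ = 1 ∧ p.2 = -p.1} := by
    ext ⟨a, b⟩
    simp only [hJ, Set.mem_setOf_eq, Set.mem_union]
    constructor
    · rintro ⟨ha, hb, h1, h2⟩
      rw [hstar] at h1
      set t : ℝ := ⟪b, a⟫_ℝ with ht
      have hba : b = t • a := by
        have h2t : (2 : ℝ) • b = (2 : ℝ) • (t • a) := by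
          have := h1
          rw [sub_eq_iff_eq_add] at this
          have h2 : (2 * t) • a = b + b := this.symm ▸ rfl
          rw [two_smul, ← h2, smul_smul]
        exact (smul_right_injective _ (by norm_num : (2:ℝ) ≠ 0) h2t)
      have ht2 : t ^ 2 = 1 := by
        have hnb : ‖b‖ = |t| * ‖a‖ := by rw [hba, norm_smul, Real.norm_eq_abs]
        rw [ha, hb, mul_one] at hnb
        have : |t| = 1 := hnb.symm
        calc t ^ 2 = |t| ^ 2 := (sq_abs t).symm
        _ = 1 := by rw [this]; norm_num
      have : t = 1 ∨ t = -1 := by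
        rcases mul_eq_zero.mp (by nlinarith : (t - 1) * (t + 1) = 0) with h | h
        · left; linarith
        · right; linarith
      rcases this with h | h
      · left; exact ⟨ha, by rw [hba, h, one_smul]⟩
      · right; exact ⟨ha, by rw [hba, h, neg_one_smul]⟩
    · have haa : ⟪a, a⟫_ℝ = ‖a‖ ^ 2 := real_inner_self_eq_norm_sq a
      rintro (⟨ha, hb⟩ | ⟨ha, hb⟩)
      · subst hb
        refine ⟨ha, ha, ?_, ?_⟩ <;>
        · rw [hstar, haa, ha]
          norm_num
          module
      · subst hb
        refine ⟨ha, by rw [norm_neg]; exact ha, ?_, ?_⟩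
        · rw [hstar, inner_neg_left, haa, ha]
          norm_num
          module
        · rw [hstar, inner_neg_right, haa, ha]
          norm_num
          module
  refine ⟨hset, ?_⟩
  set S := Metric.sphere (0 : EuclideanSpace ℝ (Fin 3)) 1
  have memJ : ∀ p : EuclideanSpace ℝ (Fin 3) × EuclideanSpace ℝ (Fin 3),
      p ∈ J ↔ (‖p.1‖ = 1 ∧ p.2 = p.1) ∨ (‖p.1‖ = 1 ∧ p.2 = -p.1) := by
    intro p; rw [hset]; rfl
  let g1 : S → J := fun a =>
    ⟨(a.1, a.1), (memJ _).mpr (Or.inl ⟨mem_sphere_zero_iff_norm.mp a.2, rfl⟩)⟩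
  let g2 : S → J := fun a =>
    ⟨(a.1, -a.1), (memJ _).mpr (Or.inr ⟨mem_sphere_zero_iff_norm.mp a.2, rfl⟩)⟩
  let f : S ⊕ S → J := Sum.elim g1 g2
  have hfcont : Continuous f := by
    apply Continuous.sumElim <;>
      exact Continuous.subtype_mk (by continuity) _
  have hfbij : Function.Bijective f := by
    constructor
    · rintro (x | x) (y | y) h <;>
        simp only [f, g1, g2, Sum.elim_inl, Sum.elim_inr, Subtype.mk_eq_mk,
          Prod.mk.injEq] at h
      · exact congrArg Sum.inl (Subtype.ext h.1)
      · exfalso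
        have hx : ‖(x : EuclideanSpace ℝ (Fin 3))‖ = 1 := mem_sphere_zero_iff_norm.mp x.2
        have hz : (x : EuclideanSpace ℝ (Fin 3)) = 0 := by
          have h2 := h.2
          rw [← h.1] at h2
          exact eq_zero_of_eq_neg_aux h2
        rw [hz] at hx; simp at hx
      · exfalso
        have hy : ‖(y : EuclideanSpace ℝ (Fin 3))‖ = 1 := mem_sphere_zero_iff_norm.mp y.2
        have hz : (y : EuclideanSpace ℝ (Fin 3)) = 0 := by
          have h2 := h.2
          rw [h.1] at h2
          exact eq_zero_of_eq_neg_aux h2.symm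
        rw [hz] at hy; simp at hy
      · exact congrArg Sum.inr (Subtype.ext h.1)
    · rintro ⟨⟨a, b⟩, hp⟩
      rcases (memJ _).mp hp with ⟨ha, hb⟩ | ⟨ha, hb⟩
      · refine ⟨Sum.inl ⟨a, mem_sphere_zero_iff_norm.mpr ha⟩, Subtype.ext ?_⟩
        show ((a, a) : _ × _) = (a, b)
        simp only [] at hb
        rw [hb]
      · refine ⟨Sum.inr ⟨a, mem_sphere_zero_iff_norm.mpr ha⟩, Subtype.ext ?_⟩
        show ((a, -a) : _ × _) = (a, b)
        have hb' : b = -a := hb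
        rw [hb']
  let e : S ⊕ S ≃ J := Equiv.ofBijective f hfbij
  exact ⟨(Continuous.homeoOfEquivCompactToT2 (f := e) hfcont).symm⟩
end

section
/- Let S² be the unit sphere in ℝ³ with the quandle operation a ⋆ b = 2⟨a,b⟩b − a. Then for a, b ∈ S², the pair (a,b) satisfies the figure-eight equations b ⋆ ( a ⋆ (b ⋆ a) ) = a and ( a ⋆ (b ⋆ a) ) ⋆ b = b ⋆ a if and only if b = a, or ⟨a,b⟩ = cos(2π/5), or ⟨a,b⟩ = cos(4π/5). Hence the invariant space J_{S²} of the figure-eight knot is the disjoint union of the diagonal {(a,a)} and the two sets {(a,b) : ⟨a,b⟩ = cos(2π/5)} and {(a,b) : ⟨a,b⟩ = cos(4π/5)}. -/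
open scoped InnerProductSpace

/-!
Write `t = ⟪a, b⟫`. Pairing the second figure-eight equation with `b` leaves the scalar equation
`(t - 1) (4t² + 2t - 1) = 0`. For unit vectors `t = 1` forces `b = a`, and conversely, when
`4t² + 2t - 1 = 0`, both equations hold identically once expanded in `a` and `b`. The roots of
`4t² + 2t - 1` are `(-1 ± √5) / 4`, i.e. `cos (2π/5)` and `cos (4π/5)`, and these differ from each
other and from `1 = cos 0` because `cos` is injective on `[0, π]`.
-/

namespace Real

lemma cos_two_pi_div_five : cos (2 * π / 5) = (√5 - 1) / 4 := by
  have h5 : √5 ^ 2 = 5 := sq_sqrt (by norm_num)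
  rw [show 2 * π / 5 = 2 * (π / 5) by ring, cos_two_mul, cos_pi_div_five]
  linear_combination (1 / 8) * h5

lemma cos_four_pi_div_five : cos (4 * π / 5) = -(1 + √5) / 4 := by
  rw [show 4 * π / 5 = π - π / 5 by ring, cos_pi_sub, cos_pi_div_five]
  ring

lemma four_mul_sq_add_two_mul_sub_one_eq (t : ℝ) :
    4 * t ^ 2 + 2 * t - 1 = 4 * (t - cos (2 * π / 5)) * (t - cos (4 * π / 5)) := by
  have h5 : √5 ^ 2 = 5 := sq_sqrt (by norm_num)
  rw [cos_two_pi_div_five, cos_four_pi_div_five]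
  linear_combination (1 / 4) * h5

lemma four_mul_sq_add_two_mul_sub_one_eq_zero_iff {t : ℝ} :
    4 * t ^ 2 + 2 * t - 1 = 0 ↔ t = cos (2 * π / 5) ∨ t = cos (4 * π / 5) := by
  rw [four_mul_sq_add_two_mul_sub_one_eq]
  simp only [mul_eq_zero, four_ne_zero, false_or, sub_eq_zero]

lemma cos_two_pi_div_five_ne_one : cos (2 * π / 5) ≠ 1 := by
  rw [← cos_zero]
  exact injOn_cos.ne ⟨by positivity, by linarith [pi_pos]⟩ ⟨le_rfl, pi_pos.le⟩
    (by positivity)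

lemma cos_four_pi_div_five_ne_one : cos (4 * π / 5) ≠ 1 := by
  rw [← cos_zero]
  exact injOn_cos.ne ⟨by positivity, by linarith [pi_pos]⟩ ⟨le_rfl, pi_pos.le⟩
    (by positivity)

lemma cos_two_pi_div_five_ne_cos_four_pi_div_five : cos (2 * π / 5) ≠ cos (4 * π / 5) :=
  injOn_cos.ne ⟨by positivity, by linarith [pi_pos]⟩ ⟨by positivity, by linarith [pi_pos]⟩
    (by linarith [pi_pos])

end Real

section SphereQuandle

variable {E : Type*} [NormedAddCommGroup E] [InnerProductSpace ℝ E]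

/-- For unit `b`, `a ⋆ b` is the half-turn of `a` about the axis `ℝ b`. -/
def sphereStar (a b : E) : E := (2 * ⟪a, b⟫_ℝ) • b - a

lemma sphereStar_self {b : E} (hb : ‖b‖ = 1) : sphereStar b b = b := by
  rw [sphereStar, real_inner_self_eq_norm_sq, hb]
  module

variable {a b : E}

lemma figureEight_cubic_of_eq (ha : ‖a‖ = 1) (hb : ‖b‖ = 1)
    (h : sphereStar (sphereStar a (sphereStar b a)) b = sphereStar b a) :
    (⟪a, b⟫_ℝ - 1) * (4 * ⟪a, b⟫_ℝ ^ 2 + 2 * ⟪a, b⟫_ℝ - 1) = 0 := by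
  have ha' : ⟪a, a⟫_ℝ = 1 := (inner_eq_one_iff_of_norm_eq_one ha ha).2 rfl
  have hb' : ⟪b, b⟫_ℝ = 1 := (inner_eq_one_iff_of_norm_eq_one hb hb).2 rfl
  have hpair := congrArg (⟪·, b⟫_ℝ) h
  simp only [sphereStar, inner_sub_left, inner_sub_right, real_inner_smul_left,
    real_inner_smul_right, ha', hb', real_inner_comm a b] at hpair
  linear_combination hpair

lemma figureEight_of_quadratic (ha : ‖a‖ = 1) (hb : ‖b‖ = 1)
    (hq : 4 * ⟪a, b⟫_ℝ ^ 2 + 2 * ⟪a, b⟫_ℝ - 1 = 0) :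
    sphereStar b (sphereStar a (sphereStar b a)) = a ∧
      sphereStar (sphereStar a (sphereStar b a)) b = sphereStar b a := by
  have ha' : ⟪a, a⟫_ℝ = 1 := (inner_eq_one_iff_of_norm_eq_one ha ha).2 rfl
  have hb' : ⟪b, b⟫_ℝ = 1 := (inner_eq_one_iff_of_norm_eq_one hb hb).2 rfl
  set t := ⟪a, b⟫_ℝ with ht
  constructor
  · simp only [sphereStar, inner_sub_right, real_inner_smul_right, ha', hb',
      real_inner_comm a b]
    match_scalars <;> rw [← ht]
    · linear_combination (8 * t ^ 3 - 4 * t ^ 2 - 4 * t + 1) * hq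
    · linear_combination (-(4 * t ^ 2 - 2 * t - 1)) * hq
  · simp only [sphereStar, inner_sub_left, inner_sub_right, real_inner_smul_left,
      real_inner_smul_right, ha', hb', real_inner_comm a b]
    match_scalars <;> rw [← ht]
    · linear_combination (2 * t - 1) * hq
    · linear_combination -hq

lemma figureEight_iff (ha : ‖a‖ = 1) (hb : ‖b‖ = 1) :
    (sphereStar b (sphereStar a (sphereStar b a)) = a ∧
        sphereStar (sphereStar a (sphereStar b a)) b = sphereStar b a) ↔
      b = a ∨ 4 * ⟪a, b⟫_ℝ ^ 2 + 2 * ⟪a, b⟫_ℝ - 1 = 0 := by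
  constructor
  · rintro ⟨-, h⟩
    rcases mul_eq_zero.1 (figureEight_cubic_of_eq ha hb h) with h | h
    · exact Or.inl ((inner_eq_one_iff_of_norm_eq_one ha hb).1 (sub_eq_zero.1 h)).symm
    · exact Or.inr h
  · rintro (rfl | h)
    · simp only [sphereStar_self ha, and_self]
    · exact figureEight_of_quadratic ha hb h

lemma figureEight_iff_inner_eq_cos (ha : ‖a‖ = 1) (hb : ‖b‖ = 1) :
    (sphereStar b (sphereStar a (sphereStar b a)) = a ∧
        sphereStar (sphereStar a (sphereStar b a)) b = sphereStar b a) ↔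
      b = a ∨ ⟪a, b⟫_ℝ = Real.cos (2 * Real.pi / 5) ∨ ⟪a, b⟫_ℝ = Real.cos (4 * Real.pi / 5) := by
  rw [figureEight_iff ha hb, Real.four_mul_sq_add_two_mul_sub_one_eq_zero_iff]

lemma diagonal_subset_inner_eq_one :
    {p : E × E | ‖p.1‖ = 1 ∧ p.2 = p.1} ⊆ {p | ‖p.1‖ = 1 ∧ ‖p.2‖ = 1 ∧ ⟪p.1, p.2⟫_ℝ = 1} := by
  rintro ⟨a, b⟩ ⟨ha, rfl : b = a⟩
  exact ⟨ha, ha, (inner_eq_one_iff_of_norm_eq_one ha ha).2 rfl⟩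

lemma disjoint_inner_eq {x y : ℝ} (hxy : x ≠ y) :
    Disjoint {p : E × E | ‖p.1‖ = 1 ∧ ‖p.2‖ = 1 ∧ ⟪p.1, p.2⟫_ℝ = x}
      {p | ‖p.1‖ = 1 ∧ ‖p.2‖ = 1 ∧ ⟪p.1, p.2⟫_ℝ = y} :=
  Set.disjoint_left.2 fun _ ⟨_, _, hx⟩ ⟨_, _, hy⟩ => hxy (hx.symm.trans hy)

end SphereQuandle

/-- For the sphere quandle `S² ⊆ ℝ³` with `a ⋆ b = 2⟨a,b⟩b − a`, a pair
`(a,b) ∈ S² × S²` satisfies the figure-eight equations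
`b ⋆ (a ⋆ (b ⋆ a)) = a` and `(a ⋆ (b ⋆ a)) ⋆ b = b ⋆ a` if and only if
`b = a`, or `⟨a,b⟩ = cos(2π/5)`, or `⟨a,b⟩ = cos(4π/5)`. Hence the invariant
space of the figure-eight knot is the disjoint union of the diagonal and the
two sets `{(a,b) : ⟨a,b⟩ = cos(2π/5)}` and `{(a,b) : ⟨a,b⟩ = cos(4π/5)}`. -/
theorem figure_eight_sphere_invariant_space
    (star : EuclideanSpace ℝ (Fin 3) → EuclideanSpace ℝ (Fin 3) →
      EuclideanSpace ℝ (Fin 3))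
    (hstar : ∀ a b : EuclideanSpace ℝ (Fin 3),
      star a b = (2 * ⟪a, b⟫_ℝ) • b - a) :
    (∀ a b : EuclideanSpace ℝ (Fin 3), ‖a‖ = 1 → ‖b‖ = 1 →
      ((star b (star a (star b a)) = a ∧
          star (star a (star b a)) b = star b a) ↔
        (b = a ∨ ⟪a, b⟫_ℝ = Real.cos (2 * Real.pi / 5) ∨
          ⟪a, b⟫_ℝ = Real.cos (4 * Real.pi / 5)))) ∧
    {p : EuclideanSpace ℝ (Fin 3) × EuclideanSpace ℝ (Fin 3) |
        ‖p.1‖ = 1 ∧ ‖p.2‖ = 1 ∧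
        star p.2 (star p.1 (star p.2 p.1)) = p.1 ∧
        star (star p.1 (star p.2 p.1)) p.2 = star p.2 p.1} =
      {p | ‖p.1‖ = 1 ∧ p.2 = p.1} ∪
        {p | ‖p.1‖ = 1 ∧ ‖p.2‖ = 1 ∧ ⟪p.1, p.2⟫_ℝ = Real.cos (2 * Real.pi / 5)} ∪
        {p | ‖p.1‖ = 1 ∧ ‖p.2‖ = 1 ∧ ⟪p.1, p.2⟫_ℝ = Real.cos (4 * Real.pi / 5)} ∧
    Disjoint
      {p : EuclideanSpace ℝ (Fin 3) × EuclideanSpace ℝ (Fin 3) |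
        ‖p.1‖ = 1 ∧ p.2 = p.1}
      {p : EuclideanSpace ℝ (Fin 3) × EuclideanSpace ℝ (Fin 3) |
        ‖p.1‖ = 1 ∧ ‖p.2‖ = 1 ∧ ⟪p.1, p.2⟫_ℝ = Real.cos (2 * Real.pi / 5)} ∧
    Disjoint
      {p : EuclideanSpace ℝ (Fin 3) × EuclideanSpace ℝ (Fin 3) |
        ‖p.1‖ = 1 ∧ p.2 = p.1}
      {p : EuclideanSpace ℝ (Fin 3) × EuclideanSpace ℝ (Fin 3) |
        ‖p.1‖ = 1 ∧ ‖p.2‖ = 1 ∧ ⟪p.1, p.2⟫_ℝ = Real.cos (4 * Real.pi / 5)} ∧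
    Disjoint
      {p : EuclideanSpace ℝ (Fin 3) × EuclideanSpace ℝ (Fin 3) |
        ‖p.1‖ = 1 ∧ ‖p.2‖ = 1 ∧ ⟪p.1, p.2⟫_ℝ = Real.cos (2 * Real.pi / 5)}
      {p : EuclideanSpace ℝ (Fin 3) × EuclideanSpace ℝ (Fin 3) |
        ‖p.1‖ = 1 ∧ ‖p.2‖ = 1 ∧ ⟪p.1, p.2⟫_ℝ = Real.cos (4 * Real.pi / 5)} := by
  obtain rfl : star = sphereStar := funext₂ hstar
  refine ⟨fun _ _ => figureEight_iff_inner_eq_cos, ?_, ?_, ?_, ?_⟩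
  · ext ⟨a, b⟩
    simp only [Set.mem_ofPred_eq, Set.mem_union]
    constructor
    · rintro ⟨ha, hb, h⟩
      rcases (figureEight_iff_inner_eq_cos ha hb).1 h with h | h | h
      · exact Or.inl (Or.inl ⟨ha, h⟩)
      · exact Or.inl (Or.inr ⟨ha, hb, h⟩)
      · exact Or.inr ⟨ha, hb, h⟩
    · rintro ((⟨ha, rfl⟩ | ⟨ha, hb, h⟩) | ⟨ha, hb, h⟩)
      · exact ⟨ha, ha, (figureEight_iff_inner_eq_cos ha ha).2 (Or.inl rfl)⟩
      · exact ⟨ha, hb, (figureEight_iff_inner_eq_cos ha hb).2 (Or.inr (Or.inl h))⟩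
      · exact ⟨ha, hb, (figureEight_iff_inner_eq_cos ha hb).2 (Or.inr (Or.inr h))⟩
  · exact (disjoint_inner_eq Real.cos_two_pi_div_five_ne_one.symm).mono_left
      diagonal_subset_inner_eq_one
  · exact (disjoint_inner_eq Real.cos_four_pi_div_five_ne_one.symm).mono_left
      diagonal_subset_inner_eq_one
  · exact disjoint_inner_eq Real.cos_two_pi_div_five_ne_cos_four_pi_div_five
end

section
/- For all a, b, c, d ∈ ℂ one has M(c,d)⁻¹ · M(a,b) · M(c,d) = M(a − acd + bc², b − ad² + bcd), where M(x,y) = [[1 − xy, −y²],[x², 1 + xy]] (note det M(c,d) = 1, so M(c,d) is invertible). Equivalently, M(a,b) · M(c,d) = M(c,d) · M(a − acd + bc², b − ad² + bcd). Hence, under the identification of the conjugacy class of C = [[1,0],[1,1]] in SL(2,ℂ) with (ℂ² ∖ {0})/±, the conjugation quandle operation becomes [a,b] ⋆ [c,d] = [a − acd + bc², b − ad² + bcd]. -/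
/-!
`M(x, y) = 1 + u vᵀ` with `u = (-y, x)` and `v = (x, y)`, a rank-one nilpotent perturbation of the
identity (`vᵀ u = 0`), so conjugating by `g` gives `1 + (g⁻¹ u)(vᵀ g)`; for `g = M(c, d)` this is again
of the form `M(x, y)`, and the new parameters are read off by a direct `2 × 2` computation.
-/

namespace Matrix

variable {R : Type*} [CommRing R]

/-- The matrix `M(x, y)` of the conjugacy class of `!![1, 0; 1, 1]`. -/
def parabolic (x y : R) : Matrix (Fin 2) (Fin 2) R :=
  !![1 - x * y, -y ^ 2; x ^ 2, 1 + x * y]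

theorem det_parabolic (x y : R) : (parabolic x y).det = 1 := by
  rw [parabolic, det_fin_two_of]
  ring

theorem parabolic_mul_parabolic (a b c d : R) :
    parabolic a b * parabolic c d =
      parabolic c d * parabolic (a - a * c * d + b * c ^ 2) (b - a * d ^ 2 + b * c * d) := by
  ext i j
  fin_cases i <;> fin_cases j <;> simp [parabolic, mul_apply, Fin.sum_univ_two] <;> ring

theorem inv_mul_mul_eq_of_mul_eq_mul {n : Type*} [Fintype n] [DecidableEq n]
    {A B C : Matrix n n R} (hB : IsUnit B.det) (h : A * B = B * C) : B⁻¹ * A * B = C := by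
  rw [mul_assoc, h, ← mul_assoc, nonsing_inv_mul B hB, one_mul]

end Matrix

open Matrix in
/-- For all `a, b, c, d ∈ ℂ` and `M(x,y) = [[1 − xy, −y²],[x², 1 + xy]]`
(which has determinant `1`, hence is invertible), one has
`M(c,d)⁻¹ · M(a,b) · M(c,d) = M(a − acd + bc², b − ad² + bcd)`, equivalently
`M(a,b) · M(c,d) = M(c,d) · M(a − acd + bc², b − ad² + bcd)`. Hence under the
identification of the conjugacy class of `C = [[1,0],[1,1]]` in `SL(2,ℂ)` with
`(ℂ² ∖ {0})/±`, the conjugation quandle operation becomes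
`[a,b] ⋆ [c,d] = [a − acd + bc², b − ad² + bcd]`. -/
theorem M_conjugation_formula (M : ℂ → ℂ → Matrix (Fin 2) (Fin 2) ℂ)
    (hM : ∀ x y : ℂ, M x y = !![1 - x * y, -y ^ 2; x ^ 2, 1 + x * y])
    (a b c d : ℂ) :
    (M c d).det = 1 ∧
    M a b * M c d =
      M c d * M (a - a * c * d + b * c ^ 2) (b - a * d ^ 2 + b * c * d) ∧
    (M c d)⁻¹ * M a b * M c d =
      M (a - a * c * d + b * c ^ 2) (b - a * d ^ 2 + b * c * d) := by
  obtain rfl : M = parabolic := funext₂ hM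
  have hmul := parabolic_mul_parabolic a b c d
  refine ⟨det_parabolic c d, hmul, inv_mul_mul_eq_of_mul_eq_mul ?_ hmul⟩
  rw [det_parabolic]
  exact isUnit_one
end

section
/- Let C = [[1,0],[1,1]] ∈ SL(2,ℂ) and let h ∈ SL(2,ℂ) be conjugate to C (i.e. h = B⁻¹ C B for some B ∈ SL(2,ℂ)). Then h C h = C h C if and only if h = C or there exists α ∈ ℂ with h = [[1 − α, −1],[α², 1 + α]]. (Each matrix D_α = [[1 − α, −1],[α², 1 + α]] is itself conjugate to C, namely D_α = A⁻¹ C A with A = [[α, 1],[−1, 0]].) -/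
/-!
Write `C = 1 + e₁ e₀ᵀ`. For `B = !![p, q; r, s]` of determinant one,
`B⁻¹ C B = 1 + (B⁻¹ e₁)(e₀ᵀ B)` with `B⁻¹ e₁ = (-q, p)` and `e₀ᵀ B = (p, q)`, so the conjugate
depends only on the first row `(p, q)` of `B`. The entries `(0,1)` and `(1,0)` of the braid
relation `h C h = C h C` then read `q²(q² - 1) = 0` and `(p² - 1)(q² - 1) = 0`: either `q = 0`
and `p² = 1`, which gives `h = C`, or `q² = 1`, which gives `h = D_{pq}`. Finally `D_α` is the
conjugate for the row `(α, 1)`.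
-/

open Matrix

variable {R : Type*} [CommRing R]

theorem inv_fin_two_of_det_eq_one {p q r s : R} (hdet : p * s - q * r = 1) :
    (!![p, q; r, s])⁻¹ = !![s, -q; -r, p] := by
  rw [inv_def, det_fin_two_of, hdet, adjugate_fin_two_of, Ring.inverse_one, one_smul]

def conjOfRow (p q : R) : Matrix (Fin 2) (Fin 2) R :=
  !![1 - p * q, -q ^ 2; p ^ 2, 1 + p * q]

theorem inv_mul_unipotent_mul_eq_conjOfRow {p q r s : R} (hdet : p * s - q * r = 1) :
    (!![p, q; r, s])⁻¹ * !![1, 0; 1, 1] * !![p, q; r, s] = conjOfRow p q := by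
  rw [inv_fin_two_of_det_eq_one hdet]
  ext i j
  fin_cases i <;> fin_cases j <;> simp [conjOfRow] <;> first | ring1 | linear_combination hdet

theorem conjOfRow_one_right (α : R) : conjOfRow α 1 = !![1 - α, -1; α ^ 2, 1 + α] := by
  simp [conjOfRow]

theorem conjOfRow_zero_right {p : R} (hp : p ^ 2 = 1) : conjOfRow p 0 = !![1, 0; 1, 1] := by
  simp [conjOfRow, hp]

theorem conjOfRow_eq_conjOfRow_mul_one {p q : R} (hq : q ^ 2 = 1) :
    conjOfRow p q = conjOfRow (p * q) 1 := by
  rw [conjOfRow, conjOfRow, mul_pow, hq, one_pow, mul_one, mul_one]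

theorem conjOfRow_one_right_braid (α : R) :
    conjOfRow α 1 * !![1, 0; 1, 1] * conjOfRow α 1 =
      !![1, 0; 1, 1] * conjOfRow α 1 * !![1, 0; 1, 1] := by
  ext i j
  fin_cases i <;> fin_cases j <;> simp [conjOfRow] <;> ring

theorem eq_or_sq_eq_one_of_conjOfRow_braid [NoZeroDivisors R] {p q : R}
    (hbraid : conjOfRow p q * !![1, 0; 1, 1] * conjOfRow p q =
      !![1, 0; 1, 1] * conjOfRow p q * !![1, 0; 1, 1]) :
    (q = 0 ∧ p ^ 2 = 1) ∨ q ^ 2 = 1 := by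
  simp only [conjOfRow, mul_fin_two, EmbeddingLike.apply_eq_iff_eq, vecCons_inj] at hbraid
  obtain ⟨⟨-, h01, -⟩, ⟨h10, -, -⟩, -⟩ := hbraid
  have hq : q ^ 2 * (q ^ 2 - 1) = 0 := by linear_combination h01
  have hpq : (p ^ 2 - 1) * (q ^ 2 - 1) = 0 := by linear_combination -h10
  rcases mul_eq_zero.1 hq with hq0 | hq1
  · refine .inl ⟨pow_eq_zero_iff two_ne_zero |>.1 hq0, ?_⟩
    linear_combination -hpq + (p ^ 2 - 1) * hq0
  · exact .inr (by linear_combination hq1)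

theorem conjOfRow_braid_iff [NoZeroDivisors R] {p q : R} :
    conjOfRow p q * !![1, 0; 1, 1] * conjOfRow p q =
        !![1, 0; 1, 1] * conjOfRow p q * !![1, 0; 1, 1] ↔
      conjOfRow p q = !![1, 0; 1, 1] ∨ ∃ α, conjOfRow p q = !![1 - α, -1; α ^ 2, 1 + α] := by
  constructor
  · intro hbraid
    rcases eq_or_sq_eq_one_of_conjOfRow_braid hbraid with ⟨rfl, hp⟩ | hq
    · exact .inl (conjOfRow_zero_right hp)
    · exact .inr ⟨p * q, by rw [conjOfRow_eq_conjOfRow_mul_one hq, conjOfRow_one_right]⟩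
  · rintro (hC | ⟨α, hα⟩)
    · rw [hC]
    · rw [hα, ← conjOfRow_one_right, conjOfRow_one_right_braid]

/-- Let `C = [[1,0],[1,1]] ∈ SL(2,ℂ)` and let `h` be conjugate to `C` in
`SL(2,ℂ)`. Then `h C h = C h C` if and only if `h = C` or
`h = D_α = [[1 − α, −1],[α², 1 + α]]` for some `α ∈ ℂ`; moreover each `D_α` is
itself conjugate to `C`, namely `D_α = A⁻¹ C A` with `A = [[α, 1],[−1, 0]]`. -/
theorem trefoil_solutions_with_g_eq_C (C h : Matrix (Fin 2) (Fin 2) ℂ)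
    (hC : C = !![1, 0; 1, 1])
    (hconj : ∃ B : Matrix (Fin 2) (Fin 2) ℂ, B.det = 1 ∧ h = B⁻¹ * C * B) :
    (h * C * h = C * h * C ↔
      h = C ∨ ∃ α : ℂ, h = !![1 - α, -1; α ^ 2, 1 + α]) ∧
    (∀ α : ℂ, !![1 - α, -1; α ^ 2, 1 + α] =
      (!![α, 1; -1, 0])⁻¹ * C * !![α, 1; -1, 0]) := by
  obtain ⟨B, hB, rfl⟩ := hconj
  subst hC
  rw [det_fin_two] at hB
  rw [eta_fin_two B, inv_mul_unipotent_mul_eq_conjOfRow hB]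
  refine ⟨conjOfRow_braid_iff, fun α => ?_⟩
  rw [inv_mul_unipotent_mul_eq_conjOfRow (show α * 0 - 1 * -1 = 1 by ring), conjOfRow_one_right]
end
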